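/- arXiv:1912.06514 — 4 statements merged into one kernel-verified Lean document; each statement's English description precedes it below -/
import Mathlib

section
/- Let A ∈ ℝ^{n×n} be Hurwitz (all eigenvalues have negative real part), B ∈ ℝ^{n×m}, and x₀ ∈ ℝ^n. Let P ∈ ℝ^{n̂×n} be a full-row-rank matrix with pseudo-inverse P† such that the row space of P equals the column space of the Kalman controllability matrix R(A,[B x₀]) = [[B x₀], A[B x₀], …, A^{n-1}[B x₀]]. Then for every input u(t) and the solution x(t) of ẋ = Ax + Bu with x(0) = x₀, the projected state ξ(t) := P x(t) satisfies ξ̇ = P A P† ξ + P B u with ξ(0) = P x₀, and moreover x(t) = P† ξ(t) for all t ≥ 0. -/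
open Matrix Polynomial Set

/-- `A` is Hurwitz: every complex eigenvalue has negative real part. -/
def IsHurwitz {n : ℕ} (A : Matrix (Fin n) (Fin n) ℝ) : Prop :=
  ∀ μ ∈ spectrum ℂ (A.map (algebraMap ℝ ℂ)), μ.re < 0

/-- The reachable subspace `im R(A,[B x₀])`: the span of the columns of the
Kalman controllability matrix of the pair `(A, [B x₀])`. -/
def reachSpan {n m : ℕ} (A : Matrix (Fin n) (Fin n) ℝ) (B : Matrix (Fin n) (Fin m) ℝ)
    (x₀ : Fin n → ℝ) : Submodule ℝ (Fin n → ℝ) :=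
  Submodule.span ℝ
    ({v | ∃ i < n, v = (A ^ i) *ᵥ x₀} ∪
     {v | ∃ i < n, ∃ j : Fin m, v = (A ^ i) *ᵥ (fun k => B k j)})

lemma sum_mulVec' {n : ℕ} {ι : Type*} (s : Finset ι) (M : ι → Matrix (Fin n) (Fin n) ℝ)
    (w : Fin n → ℝ) : (∑ i ∈ s, M i) *ᵥ w = ∑ i ∈ s, M i *ᵥ w := by
  funext j
  simp [mulVec, dotProduct, Matrix.sum_apply, Finset.sum_mul]
  rw [Finset.sum_comm]

lemma cayley_pow {n : ℕ} (A : Matrix (Fin n) (Fin n) ℝ) :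
    A ^ n = -∑ i ∈ Finset.range n, A.charpoly.coeff i • A ^ i := by
  rcases Nat.eq_zero_or_pos n with h | h
  · subst h; exact Subsingleton.elim _ _
  have hm := A.charpoly_monic
  have hd : A.charpoly.natDegree = n := by simpa using A.charpoly_natDegree_eq_dim
  have h0 := A.aeval_self_charpoly
  rw [aeval_eq_sum_range, hd, Finset.sum_range_succ] at h0
  have hc : A.charpoly.coeff n = 1 := by have := hm.coeff_natDegree; rwa [hd] at this
  rw [hc, one_smul] at h0
  exact eq_neg_of_add_eq_zero_right h0

lemma reachSpan_Ainv {n m : ℕ} (A : Matrix (Fin n) (Fin n) ℝ) (B : Matrix (Fin n) (Fin m) ℝ)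
    (x₀ : Fin n → ℝ) {v : Fin n → ℝ} (hv : v ∈ reachSpan A B x₀) :
    A *ᵥ v ∈ reachSpan A B x₀ := by
  set V := reachSpan A B x₀ with hV
  have key : ∀ w : Fin n → ℝ, (∀ i < n, (A ^ i) *ᵥ w ∈ V) → ∀ i < n, A *ᵥ ((A ^ i) *ᵥ w) ∈ V := by
    intro w hw i hi
    have h1 : A *ᵥ ((A ^ i) *ᵥ w) = (A ^ (i + 1)) *ᵥ w := by
      rw [mulVec_mulVec, ← pow_succ']
    rw [h1]
    rcases lt_or_eq_of_le (Nat.succ_le_of_lt hi) with h | h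
    · exact hw _ h
    · rw [show i + 1 = n from h, cayley_pow A, Matrix.neg_mulVec, sum_mulVec']
      refine V.neg_mem (Submodule.sum_mem _ fun i hi' => ?_)
      rw [Matrix.smul_mulVec]
      exact V.smul_mem _ (hw _ (Finset.mem_range.mp hi'))
  have hmap : Submodule.map A.mulVecLin V ≤ V := by
    rw [hV, reachSpan, Submodule.map_span, Submodule.span_le]
    rintro _ ⟨w, hw, rfl⟩
    rcases hw with ⟨i, hi, rfl⟩ | ⟨i, hi, j, rfl⟩
    · exact key x₀ (fun k hk => Submodule.subset_span (Or.inl ⟨k, hk, rfl⟩)) i hi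
    · exact key _ (fun k hk => Submodule.subset_span (Or.inr ⟨k, hk, j, rfl⟩)) i hi
  exact hmap ⟨v, hv, rfl⟩

/-- if the row space of `P` equals the reachable subspace of
`(A,[B x₀])`, then the compressed state `ξ = Px` obeys the reduced dynamics
`ξ̇ = PAP†ξ + PBu`, `ξ(0) = Px₀`, and the state is recovered losslessly:
`x(t) = P†ξ(t)` for all `t ≥ 0`. -/
theorem stmt0 {n m nh : ℕ}
    (A : Matrix (Fin n) (Fin n) ℝ) (B : Matrix (Fin n) (Fin m) ℝ) (x₀ : Fin n → ℝ)
    (hA : IsHurwitz A)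
    (P : Matrix (Fin nh) (Fin n) ℝ) (Pdag : Matrix (Fin n) (Fin nh) ℝ)
    -- `P` has full row rank and `Pdag` is its Moore–Penrose pseudo-inverse:
    (hPP : P * Pdag = 1) (hsym : (Pdag * P)ᵀ = Pdag * P)
    -- row space of `P` = reachable subspace:
    (hrange : LinearMap.range (Pᵀ.mulVecLin) = reachSpan A B x₀)
    (u : ℝ → Fin m → ℝ) (x : ℝ → Fin n → ℝ)
    (hx0 : x 0 = x₀)
    (hx : ∀ t : ℝ, HasDerivAt x (A *ᵥ x t + B *ᵥ u t) t) :
    (P *ᵥ x 0 = P *ᵥ x₀) ∧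
    (∀ t : ℝ, 0 ≤ t →
      HasDerivAt (fun s => P *ᵥ x s)
        ((P * A * Pdag) *ᵥ (P *ᵥ x t) + (P * B) *ᵥ u t) t) ∧
    (∀ t : ℝ, 0 ≤ t → x t = Pdag *ᵥ (P *ᵥ x t)) := by
  set V := reachSpan A B x₀ with hV
  set Pi := Pdag * P with hPi
  -- Pi fixes V
  have hfix : ∀ v ∈ V, Pi *ᵥ v = v := by
    intro v hv
    rw [← hrange] at hv
    obtain ⟨w, rfl⟩ := hv
    rw [Matrix.mulVecLin_apply, mulVec_mulVec]
    have hm : Pi * Pᵀ = Pᵀ := by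
      calc Pi * Pᵀ = Piᵀ * Pᵀ := by rw [hsym]
        _ = (P * Pi)ᵀ := (Matrix.transpose_mul _ _).symm
        _ = Pᵀ := by rw [hPi, ← Matrix.mul_assoc, hPP, Matrix.one_mul]
    rw [hm]
  -- Pi maps everything into V
  have hPdagV : ∀ w : Fin nh → ℝ, Pdag *ᵥ w ∈ V := by
    intro w
    have hPd : Pdag = Pᵀ * (Pdagᵀ * Pdag) := by
      calc Pdag = Pdag * (P * Pdag) := by rw [hPP, Matrix.mul_one]
        _ = (Pdag * P) * Pdag := by rw [Matrix.mul_assoc]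
        _ = (Pdag * P)ᵀ * Pdag := by rw [hsym]
        _ = Pᵀ * (Pdagᵀ * Pdag) := by rw [Matrix.transpose_mul, Matrix.mul_assoc]
    rw [← hrange]
    exact ⟨(Pdagᵀ * Pdag) *ᵥ w, by rw [Matrix.mulVecLin_apply, mulVec_mulVec, ← hPd]⟩
  have hPiV : ∀ w : Fin n → ℝ, Pi *ᵥ w ∈ V := by
    intro w
    rw [hPi, ← mulVec_mulVec]
    exact hPdagV _
  -- x₀ and columns of B lie in V
  have hnV : ∀ v : Fin n → ℝ, n = 0 → v ∈ V := by
    intro v h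
    have : v = 0 := by subst h; exact Subsingleton.elim _ _
    rw [this]; exact V.zero_mem
  have hx₀V : x₀ ∈ V := by
    rcases Nat.eq_zero_or_pos n with h | h
    · exact hnV _ h
    · exact Submodule.subset_span (Or.inl ⟨0, h, by rw [pow_zero, one_mulVec]⟩)
  have hBV : ∀ j, (fun k => B k j) ∈ V := by
    intro j
    rcases Nat.eq_zero_or_pos n with h | h
    · exact hnV _ h
    · exact Submodule.subset_span (Or.inr ⟨0, h, j, by rw [pow_zero, one_mulVec]⟩)
  have hBuV : ∀ c : Fin m → ℝ, B *ᵥ c ∈ V := by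
    intro c
    have hs : B *ᵥ c = ∑ j : Fin m, c j • (fun k => B k j) := by
      funext k
      simp [mulVec, dotProduct, Finset.sum_apply, mul_comm]
    rw [hs]
    exact Submodule.sum_mem _ fun j _ => V.smul_mem _ (hBV j)
  -- the defect y t := x t - Pi *ᵥ x t satisfies a linear ODE with zero initial data
  set M : Matrix (Fin n) (Fin n) ℝ := (1 - Pi) * A with hM
  set y : ℝ → Fin n → ℝ := fun t => x t - Pi *ᵥ x t with hy
  have key_eq : ∀ (w : Fin n → ℝ) (c : Fin m → ℝ),
      (A *ᵥ w + B *ᵥ c) - Pi *ᵥ (A *ᵥ w + B *ᵥ c) = M *ᵥ (w - Pi *ᵥ w) := by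
    intro w c
    have e1 : Pi *ᵥ (B *ᵥ c) = B *ᵥ c := hfix _ (hBuV c)
    have e2 : Pi *ᵥ (A *ᵥ (Pi *ᵥ w)) = A *ᵥ (Pi *ᵥ w) :=
      hfix _ (reachSpan_Ainv A B x₀ (hPiV w))
    simp only [hM, ← mulVec_mulVec, Matrix.mulVec_add, Matrix.mulVec_sub, Matrix.sub_mulVec,
      Matrix.one_mulVec, e1, e2]
    abel
  have hydef : ∀ t, HasDerivAt y (M *ᵥ y t) t := by
    intro t
    have Lq : (Fin n → ℝ) →L[ℝ] (Fin n → ℝ) :=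
      LinearMap.toContinuousLinearMap (LinearMap.id - Pi.mulVecLin)
    have hLq : HasDerivAt (fun s => (LinearMap.toContinuousLinearMap
        (LinearMap.id - Pi.mulVecLin) : (Fin n → ℝ) →L[ℝ] (Fin n → ℝ)) (x s))
        ((LinearMap.toContinuousLinearMap (LinearMap.id - Pi.mulVecLin) :
          (Fin n → ℝ) →L[ℝ] (Fin n → ℝ)) (A *ᵥ x t + B *ᵥ u t)) t :=
      (ContinuousLinearMap.hasFDerivAt _).comp_hasDerivAt t (hx t)
    simp only [LinearMap.coe_toContinuousLinearMap', LinearMap.sub_apply, LinearMap.id_apply,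
      Matrix.mulVecLin_apply] at hLq
    rw [hy]
    convert hLq using 1
    exact (key_eq (x t) (u t)).symm
  have hy0 : y 0 = 0 := by
    rw [hy]
    simp only [hx0, hfix x₀ hx₀V, sub_self]
  -- uniqueness of ODE solutions: y ≡ 0
  have hyzero : ∀ t : ℝ, y t = 0 := by
    intro t
    set L2 : (Fin n → ℝ) →L[ℝ] (Fin n → ℝ) := LinearMap.toContinuousLinearMap M.mulVecLin
      with hL2
    have hco : ∀ z : Fin n → ℝ, M *ᵥ z = L2 z := by
      intro z
      simp [hL2]
    have hv : ∀ s : ℝ, LipschitzOnWith ‖L2‖₊ (fun z : Fin n → ℝ => M *ᵥ z) univ := by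
      intro s
      have h := L2.lipschitz.lipschitzOnWith (s := (univ : Set (Fin n → ℝ)))
      have hfe : (fun z : Fin n → ℝ => M *ᵥ z) = ⇑L2 := by
        funext z; exact hco z
      rw [hfe]; exact h
    have h01 : (0:ℝ) ∈ Ioo (-(|t|+1)) (|t|+1) := by
      constructor <;> [nlinarith [abs_nonneg t]; nlinarith [abs_nonneg t]]
    have hteq := ODE_solution_unique_of_mem_Ioo (v := fun _ z => M *ᵥ z)
      (s := fun _ => (univ : Set (Fin n → ℝ))) (K := ‖L2‖₊) (f := y)
      (g := fun _ => (0 : Fin n → ℝ)) (t₀ := 0) (a := -(|t|+1)) (b := |t|+1)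
      (fun s _ => hv s) h01
      (fun s _ => ⟨hydef s, mem_univ _⟩)
      (fun s _ => ⟨by simpa [Matrix.mulVec_zero] using hasDerivAt_const s (0 : Fin n → ℝ),
        mem_univ _⟩)
      hy0
    have ht' : t ∈ Ioo (-(|t|+1)) (|t|+1) := by
      constructor <;> [nlinarith [abs_nonneg t, neg_abs_le t]; nlinarith [le_abs_self t]]
    exact hteq ht'
  have hxe : ∀ t : ℝ, x t = Pi *ᵥ x t := by
    intro t
    have := hyzero t
    rw [hy] at this
    simpa [sub_eq_zero] using this
  refine ⟨by rw [hx0], ?_, ?_⟩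
  · intro t _
    have hder : HasDerivAt (fun s => (LinearMap.toContinuousLinearMap P.mulVecLin :
        (Fin n → ℝ) →L[ℝ] (Fin nh → ℝ)) (x s))
        ((LinearMap.toContinuousLinearMap P.mulVecLin :
          (Fin n → ℝ) →L[ℝ] (Fin nh → ℝ)) (A *ᵥ x t + B *ᵥ u t)) t :=
      (ContinuousLinearMap.hasFDerivAt _).comp_hasDerivAt t (hx t)
    simp only [LinearMap.coe_toContinuousLinearMap', Matrix.mulVecLin_apply] at hder
    convert hder using 1
    have hxp : Pdag *ᵥ (P *ᵥ x t) = x t := by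
      rw [mulVec_mulVec, ← hPi]; exact (hxe t).symm
    rw [Matrix.mulVec_add]
    congr 1
    · rw [← mulVec_mulVec, ← mulVec_mulVec, hxp]
    · rw [← mulVec_mulVec]
  · intro t _
    rw [mulVec_mulVec, ← hPi]
    exact hxe t
end

section
/- Let A ∈ ℝ^{n×n}, B ∈ ℝ^{n×m}, x₀ ∈ ℝ^n, and let P ∈ ℝ^{n̂×n} be full row rank. Suppose that for every input u and every t ≥ 0 the solution x(t) of ẋ = Ax + Bu, x(0) = x₀, satisfies (I − P†P) x(t) = 0. Then the column space of the controllability matrix R(A,[B x₀]) is contained in the kernel of (I − P†P), i.e., P†P v = v for every v in the reachable subspace spanned by {Aⁱ x₀, Aⁱ B_j : 0 ≤ i ≤ n−1, 1 ≤ j ≤ m}. -/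
open Matrix

noncomputable section AuxStmt1

open NormedSpace

attribute [local instance] Matrix.linftyOpNormedRing Matrix.linftyOpNormedAlgebra

variable {n : ℕ}

/-- A matrix as a continuous linear map on vectors. -/
noncomputable def matCLM (M : Matrix (Fin n) (Fin n) ℝ) : (Fin n → ℝ) →L[ℝ] (Fin n → ℝ) :=
  LinearMap.toContinuousLinearMap (Matrix.toLin' M)

lemma matCLM_apply (M : Matrix (Fin n) (Fin n) ℝ) (v : Fin n → ℝ) :
    matCLM M v = M *ᵥ v := Matrix.toLin'_apply M v

/-- `matCLM` as a continuous linear map. -/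
noncomputable def matCLMl :
    Matrix (Fin n) (Fin n) ℝ →L[ℝ] ((Fin n → ℝ) →L[ℝ] (Fin n → ℝ)) :=
  LinearMap.toContinuousLinearMap
    ((LinearMap.toContinuousLinearMap :
        ((Fin n → ℝ) →ₗ[ℝ] (Fin n → ℝ)) ≃ₗ[ℝ] ((Fin n → ℝ) →L[ℝ] (Fin n → ℝ))).toLinearMap.comp
      (Matrix.toLin' : Matrix (Fin n) (Fin n) ℝ ≃ₗ[ℝ] _).toLinearMap)

lemma matCLMl_apply (M : Matrix (Fin n) (Fin n) ℝ) : matCLMl M = matCLM M := rfl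

lemma hasDerivAt_matVec {g : ℝ → Fin n → ℝ} {g' : Fin n → ℝ} {t : ℝ}
    (M : Matrix (Fin n) (Fin n) ℝ) (h : HasDerivAt g g' t) :
    HasDerivAt (fun s => M *ᵥ g s) (M *ᵥ g') t := by
  have := (matCLM M).hasFDerivAt.comp_hasDerivAt t h
  simpa [matCLM_apply, Function.comp_def] using this

/-- If a differentiable function with continuous derivative vanishes on `[0, ∞)`, so does
its derivative. -/
lemma deriv_vanish {g d : ℝ → Fin n → ℝ} (hg : ∀ t, HasDerivAt g (d t) t)
    (hd : Continuous d) (h0 : ∀ t, 0 ≤ t → g t = 0) : ∀ t, 0 ≤ t → d t = 0 := by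
  have hIoi : ∀ s ∈ Set.Ioi (0 : ℝ), d s = 0 := by
    intro s hs
    have hev : g =ᶠ[nhds s] fun _ => (0 : Fin n → ℝ) :=
      Filter.eventuallyEq_of_mem (Ioi_mem_nhds hs) (fun u hu => h0 u (le_of_lt hu))
    have hconst : HasDerivAt g 0 s :=
      (hasDerivAt_const s (0 : Fin n → ℝ)).congr_of_eventuallyEq hev
    exact (hg s).unique hconst
  intro t ht
  have hcl : Set.EqOn d 0 (closure (Set.Ioi (0 : ℝ))) :=
    Set.EqOn.closure (fun s hs => hIoi s hs) hd continuous_const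
  simpa using hcl (by simpa [closure_Ioi] using ht)

/-- Key iteration: if `Q g(t) = 0` on `[0, ∞)` along a solution of `g' = A g + b`, then
`Q Aⁱ (A g(t) + b) = 0` on `[0, ∞)` for all `i`. -/
lemma chain {g : ℝ → Fin n → ℝ} {Q A : Matrix (Fin n) (Fin n) ℝ} {b : Fin n → ℝ}
    (hg : ∀ t, HasDerivAt g (A *ᵥ g t + b) t)
    (h0 : ∀ t, 0 ≤ t → Q *ᵥ g t = 0) :
    ∀ i : ℕ, ∀ t, 0 ≤ t → (Q * A ^ i) *ᵥ (A *ᵥ g t + b) = 0 := by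
  have hcontg : Continuous g := by
    rw [continuous_iff_continuousAt]; exact fun t => (hg t).continuousAt
  -- generic step: if M g is constant on [0,∞) then M (A g + b) vanishes there
  have step : ∀ (M : Matrix (Fin n) (Fin n) ℝ) (c : Fin n → ℝ),
      (∀ t, 0 ≤ t → M *ᵥ g t = c) → ∀ t, 0 ≤ t → M *ᵥ (A *ᵥ g t + b) = 0 := by
    intro M c hc
    have hderiv : ∀ t, HasDerivAt (fun s => M *ᵥ g s - c) (M *ᵥ (A *ᵥ g t + b)) t :=
      fun t => (hasDerivAt_matVec M (hg t)).sub_const c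
    have hdcont : Continuous fun t => M *ᵥ (A *ᵥ g t + b) := by
      have : Continuous fun t => matCLM M (matCLM A (g t) + b) :=
        (matCLM M).continuous.comp (((matCLM A).continuous.comp hcontg).add continuous_const)
      simpa [matCLM_apply] using this
    have := deriv_vanish hderiv hdcont (fun t ht => by simp [hc t ht])
    exact this
  have aux : ∀ i : ℕ, ∃ c, ∀ t, 0 ≤ t → (Q * A ^ i) *ᵥ g t = c := by
    intro i
    induction i with
    | zero => exact ⟨0, fun t ht => by simpa using h0 t ht⟩
    | succ i ih =>
      obtain ⟨c, hc⟩ := ih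
      refine ⟨-((Q * A ^ i) *ᵥ b), fun t ht => ?_⟩
      have h1 := step (Q * A ^ i) c hc t ht
      have h2 : (Q * A ^ (i + 1)) *ᵥ g t = (Q * A ^ i) *ᵥ (A *ᵥ g t) := by
        rw [Matrix.mulVec_mulVec, mul_assoc, ← pow_succ]
      rw [Matrix.mulVec_add] at h1
      rw [h2]
      exact eq_neg_of_add_eq_zero_left h1
  intro i t ht
  obtain ⟨c, hc⟩ := aux i
  exact step (Q * A ^ i) c hc t ht

/-- Existence of an explicit solution of `g' = A g + b`, `g 0 = x₀`. -/
lemma exists_traj (A : Matrix (Fin n) (Fin n) ℝ) (x₀ b : Fin n → ℝ) :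
    ∃ g : ℝ → Fin n → ℝ, g 0 = x₀ ∧ ∀ t, HasDerivAt g (A *ᵥ g t + b) t := by
  classical
  set E : ℝ → Matrix (Fin n) (Fin n) ℝ := fun t => exp (t • A) with hE
  have hE0 : E 0 = 1 := by simp [hE]
  have hcontE : Continuous E := by
    exact exp_continuous.comp (continuous_id.smul continuous_const)
  set w : ℝ → Fin n → ℝ := fun t => ∫ s in (0 : ℝ)..t, E (-s) *ᵥ b with hw
  refine ⟨fun t => E t *ᵥ (x₀ + w t), ?_, ?_⟩
  · simp [hE0, hw, Matrix.one_mulVec]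
  · intro t
    have hcont_int : Continuous fun s : ℝ => E (-s) *ᵥ b := by
      have : Continuous fun s : ℝ => matCLM (E (-s)) b :=
        ((matCLMl.continuous.comp (hcontE.comp continuous_neg)).clm_apply continuous_const)
      simpa [matCLMl_apply, matCLM_apply] using this
    have hwd : HasDerivAt w (E (-t) *ᵥ b) t :=
      (hcont_int.integral_hasStrictDerivAt 0 t).hasDerivAt
    have hExp : HasDerivAt E (A * E t) t := by
      exact hasDerivAt_exp_smul_const' (𝕂 := ℝ) A t
    have hc : HasDerivAt (fun u => matCLM (E u)) (matCLM (A * E t)) t := by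
      have := matCLMl.hasFDerivAt.comp_hasDerivAt t hExp
      exact this
    have hu : HasDerivAt (fun u => x₀ + w u) (E (-t) *ᵥ b) t := hwd.const_add x₀
    have hmain := hc.clm_apply hu
    simp only [matCLM_apply] at hmain
    have hEE : E t * E (-t) = 1 := by
      rw [hE]; beta_reduce
      rw [← Matrix.exp_add_of_commute _ _ (((Commute.refl A).smul_left t).smul_right (-t))]
      simp
    have heq : (A * E t) *ᵥ (x₀ + w t) + E t *ᵥ E (-t) *ᵥ b
        = A *ᵥ (E t *ᵥ (x₀ + w t)) + b := by
      rw [Matrix.mulVec_mulVec, hEE, Matrix.one_mulVec, Matrix.mulVec_mulVec]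
    rw [heq] at hmain
    exact hmain

end AuxStmt1

/-- if every trajectory of `ẋ = Ax + Bu`, `x(0) = x₀`, satisfies
`(I − P†P)x(t) = 0` for `t ≥ 0`, then `P†P v = v` for every `v` in the
reachable subspace spanned by `{Aⁱx₀, AⁱB_j}`. -/
theorem stmt1 {n m nh : ℕ}
    (A : Matrix (Fin n) (Fin n) ℝ) (B : Matrix (Fin n) (Fin m) ℝ) (x₀ : Fin n → ℝ)
    (P : Matrix (Fin nh) (Fin n) ℝ) (Pdag : Matrix (Fin n) (Fin nh) ℝ)
    -- `P` has full row rank and `Pdag` is its Moore–Penrose pseudo-inverse: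
    (hPP : P * Pdag = 1) (hsym : (Pdag * P)ᵀ = Pdag * P)
    -- every trajectory stays in the row space of `P`:
    (hinv : ∀ (u : ℝ → Fin m → ℝ) (x : ℝ → Fin n → ℝ),
      Continuous u → x 0 = x₀ →
      (∀ t : ℝ, HasDerivAt x (A *ᵥ x t + B *ᵥ u t) t) →
      ∀ t : ℝ, 0 ≤ t → (1 - Pdag * P) *ᵥ x t = 0) :
    ∀ v ∈ reachSpan A B x₀, (Pdag * P) *ᵥ v = v := by
  classical
  set Q : Matrix (Fin n) (Fin n) ℝ := 1 - Pdag * P with hQ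
  -- main facts from trajectories with constant inputs
  have key : ∀ ub : Fin m → ℝ,
      (Q *ᵥ x₀ = 0) ∧ ∀ i : ℕ, (Q * A ^ i) *ᵥ (A *ᵥ x₀ + B *ᵥ ub) = 0 := by
    intro ub
    obtain ⟨g, hg0, hgd⟩ := exists_traj A x₀ (B *ᵥ ub)
    have h0 : ∀ t, 0 ≤ t → Q *ᵥ g t = 0 :=
      fun t ht => hinv (fun _ => ub) g continuous_const hg0 hgd t ht
    constructor
    · have := h0 0 le_rfl; rwa [hg0] at this
    · intro i
      have := chain hgd h0 i 0 le_rfl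
      rwa [hg0] at this
  have hx0 : Q *ᵥ x₀ = 0 := (key 0).1
  -- Q Aⁱ x₀ = 0
  have QA : ∀ i : ℕ, Q *ᵥ (A ^ i *ᵥ x₀) = 0 := by
    intro i
    induction i with
    | zero => simpa using hx0
    | succ i _ =>
      have h := (key 0).2 i
      rw [Matrix.mulVec_zero, add_zero] at h
      have heq : (Q * A ^ i) *ᵥ (A *ᵥ x₀) = Q *ᵥ (A ^ (i + 1) *ᵥ x₀) := by
        simp only [Matrix.mulVec_mulVec]
        rw [mul_assoc, ← pow_succ]
      rwa [heq] at h
  -- Q Aⁱ B_j = 0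
  have QB : ∀ (i : ℕ) (j : Fin m), Q *ᵥ (A ^ i *ᵥ fun k => B k j) = 0 := by
    intro i j
    have h := (key (Pi.single j 1)).2 i
    have hBj : B *ᵥ Pi.single j 1 = fun k => B k j := by
      funext k; simp [Matrix.mulVec_single]
    rw [hBj, Matrix.mulVec_add] at h
    have h1 : (Q * A ^ i) *ᵥ (A *ᵥ x₀) = 0 := by
      have hq := QA (i + 1)
      simp only [Matrix.mulVec_mulVec] at hq ⊢
      rwa [mul_assoc, ← pow_succ]
    rw [h1, zero_add] at h
    rw [Matrix.mulVec_mulVec]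
    exact h
  -- conclude on the span
  intro v hv
  have hker : reachSpan A B x₀ ≤ LinearMap.ker (Matrix.mulVecLin Q) := by
    rw [reachSpan, Submodule.span_le]
    rintro w (⟨i, _, rfl⟩ | ⟨i, _, j, rfl⟩)
    · exact LinearMap.mem_ker.2 (by simpa [Matrix.mulVecLin_apply] using QA i)
    · exact LinearMap.mem_ker.2 (by simpa [Matrix.mulVecLin_apply] using QB i j)
  have hQv : Q *ᵥ v = 0 := by simpa [Matrix.mulVecLin_apply] using hker hv
  rw [hQ, Matrix.sub_mulVec, Matrix.one_mulVec, sub_eq_zero] at hQv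
  exact hQv.symm
end

section
/- Let A ∈ ℝ^{n×n} be Hurwitz, B ∈ ℝ^{n×m}, x₀ ∈ ℝ^n, and suppose P ∈ ℝ^{n̂×n} satisfies im Pᵀ = im R(A,[B x₀]). Let F̂ ∈ ℝ^{m×n̂} be such that P A P† − P B F̂ is Hurwitz, and set F := F̂ P ∈ ℝ^{m×n}. Then A − B F is Hurwitz. -/
/-!
`Q := P† P` is the orthogonal projector onto the reachable subspace, which is `A`-invariant
(Cayley–Hamilton) and contains the columns of `B`. So `A - B F̂ P` is block upper-triangular with
respect to `im Q ⊕ ker Q`: on `im Q`, in the coordinate `ξ = P x`, it acts as `P A P† - P B F̂`,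
and on the quotient by `im Q` it acts as `A` does. An eigenvector of `A - B F̂ P` either lies in
`im Q`, giving an eigenvalue of the reduced matrix, or has a nonzero image in the quotient,
giving an eigenvalue of `A`.
-/

open Matrix

namespace Matrix

open Polynomial

theorem pow_mulVec_mem_of_forall_lt_card {R ι : Type*} [CommRing R] [Nontrivial R]
    [Fintype ι] [DecidableEq ι] {A : Matrix ι ι R} {y : ι → R} {W : Submodule R (ι → R)}
    (hy : ∀ i < Fintype.card ι, A ^ i *ᵥ y ∈ W) (k : ℕ) : A ^ k *ᵥ y ∈ W := by
  rw [A.pow_eq_aeval_mod_charpoly k, aeval_eq_sum_range, sum_mulVec]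
  refine W.sum_mem fun i _ => ?_
  rw [smul_mulVec]
  by_cases hi : i < Fintype.card ι
  · exact W.smul_mem _ (hy i hi)
  · have hdeg : (X ^ k %ₘ A.charpoly).degree < i :=
      (degree_modByMonic_lt _ A.charpoly_monic).trans_le
        (by rw [A.charpoly_degree_eq_dim]; exact_mod_cast not_lt.mp hi)
    rw [coeff_eq_zero_of_degree_lt hdeg, zero_smul]
    exact W.zero_mem

section Spectrum

variable {K ι κ : Type*} [Field K] [Fintype ι] [DecidableEq ι]

theorem mem_spectrum_iff_exists_mulVec_eq_smul (A : Matrix ι ι K) (μ : K) :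
    μ ∈ spectrum K A ↔ ∃ v ≠ 0, A *ᵥ v = μ • v := by
  rw [← spectrum_toLin', ← Module.End.hasEigenvalue_iff_mem_spectrum]
  constructor
  · intro h
    obtain ⟨v, hv⟩ := h.exists_hasEigenvector
    exact ⟨v, hv.2, Module.End.mem_eigenspace_iff.mp hv.1⟩
  · rintro ⟨v, hv0, hv⟩
    exact Module.End.hasEigenvalue_of_hasEigenvector ⟨Module.End.mem_eigenspace_iff.mpr hv, hv0⟩

/-- `N * A * N = N * A` says that `ker N` is `A`-invariant, so on `im N` the matrix `N * A` is
the map induced by `A` on the quotient by `ker N`. Its eigenvalues are roots of `A.charpoly`,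
since `N * p(A) * w = p(μ) • w` for every polynomial `p`. -/
theorem mem_spectrum_of_mulVec_compression_eq_smul {A N : Matrix ι ι K}
    (hN : N * A * N = N * A) {w : ι → K} (hw0 : w ≠ 0) (hNw : N *ᵥ w = w) {μ : K}
    (hμ : (N * A) *ᵥ w = μ • w) : μ ∈ spectrum K A := by
  have hpow : ∀ k : ℕ, N *ᵥ (A ^ k *ᵥ w) = μ ^ k • w := by
    intro k
    induction k with
    | zero => simpa using hNw
    | succ k ih =>
      calc N *ᵥ (A ^ (k + 1) *ᵥ w) = (N * A * N) *ᵥ (A ^ k *ᵥ w) := by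
            simp only [hN, pow_succ', mulVec_mulVec, Matrix.mul_assoc]
        _ = μ ^ (k + 1) • w := by
            rw [← mulVec_mulVec, ih, mulVec_smul, hμ, smul_smul, pow_succ]
  have heval : ∀ p : K[X], N *ᵥ (aeval A p *ᵥ w) = p.eval μ • w := by
    intro p
    induction p using Polynomial.induction_on' with
    | add p q hp hq => simp only [map_add, add_mulVec, mulVec_add, hp, hq, eval_add, add_smul]
    | monomial k a =>
      rw [aeval_monomial, eval_monomial, Algebra.algebraMap_eq_smul_one, smul_mul_assoc,
        Matrix.one_mul, smul_mulVec, mulVec_smul, hpow, smul_smul]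
  have hroot : A.charpoly.eval μ • w = 0 := by
    rw [← heval, aeval_self_charpoly, zero_mulVec, mulVec_zero]
  exact mem_spectrum_of_isRoot_charpoly ((smul_eq_zero.mp hroot).resolve_right hw0)

theorem spectrum_subset_union_of_range_invariant [Fintype κ] [DecidableEq κ]
    {M A : Matrix ι ι K} {P : Matrix κ ι K} {Pdag : Matrix ι κ K} (hPP : P * Pdag = 1)
    (hA : Pdag * P * A * (Pdag * P) = A * (Pdag * P))
    (hMA : (1 - Pdag * P) * M = (1 - Pdag * P) * A) :
    spectrum K M ⊆ spectrum K (P * M * Pdag) ∪ spectrum K A := by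
  have hQQ : Pdag * P * (Pdag * P) = Pdag * P := by
    rw [Matrix.mul_assoc, ← Matrix.mul_assoc P, hPP, Matrix.one_mul]
  have hN : (1 - Pdag * P) * A * (1 - Pdag * P) = (1 - Pdag * P) * A := by
    rw [mul_sub, mul_one, sub_eq_self, sub_mul, sub_mul, one_mul, hA, sub_self]
  intro μ hμ
  obtain ⟨v, hv0, hv⟩ := (mem_spectrum_iff_exists_mulVec_eq_smul M μ).mp hμ
  by_cases hw : (1 - Pdag * P) *ᵥ v = 0
  · have hQv : (Pdag * P) *ᵥ v = v := by
      rw [sub_mulVec, one_mulVec, sub_eq_zero] at hw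
      exact hw.symm
    refine Or.inl ((mem_spectrum_iff_exists_mulVec_eq_smul _ μ).mpr ⟨P *ᵥ v, ?_, ?_⟩)
    · intro h
      apply hv0
      rw [← hQv, ← mulVec_mulVec, h, mulVec_zero]
    · calc (P * M * Pdag) *ᵥ (P *ᵥ v) = P *ᵥ (M *ᵥ ((Pdag * P) *ᵥ v)) := by
            simp only [mulVec_mulVec, Matrix.mul_assoc]
        _ = μ • (P *ᵥ v) := by rw [hQv, hv, mulVec_smul]
  · refine Or.inr (mem_spectrum_of_mulVec_compression_eq_smul hN hw ?_ ?_)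
    · rw [mulVec_mulVec, sub_mul, one_mul, mul_sub, mul_one, hQQ, sub_self, sub_zero]
    · calc ((1 - Pdag * P) * A) *ᵥ ((1 - Pdag * P) *ᵥ v) = ((1 - Pdag * P) * M) *ᵥ v := by
            rw [mulVec_mulVec, hN, hMA]
        _ = μ • ((1 - Pdag * P) *ᵥ v) := by rw [← mulVec_mulVec, hv, mulVec_smul]

end Spectrum

section Projection

variable {R ι κ : Type*} [CommRing R] [Fintype ι] [Fintype κ] {P : Matrix κ ι R}
  {Pdag : Matrix ι κ R}

theorem mulVec_mem_range_transpose_of_isSymm (hsym : (Pdag * P)ᵀ = Pdag * P)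
    (x : ι → R) : (Pdag * P) *ᵥ x ∈ LinearMap.range Pᵀ.mulVecLin :=
  ⟨Pdagᵀ *ᵥ x, by rw [mulVecLin_apply, mulVec_mulVec, ← transpose_mul, hsym]⟩

theorem mulVec_eq_self_of_mem_range_transpose [DecidableEq κ] (hPP : P * Pdag = 1)
    (hsym : (Pdag * P)ᵀ = Pdag * P) {x : ι → R} (hx : x ∈ LinearMap.range Pᵀ.mulVecLin) :
    (Pdag * P) *ᵥ x = x := by
  obtain ⟨u, rfl⟩ := hx
  rw [mulVecLin_apply, mulVec_mulVec, ← hsym, ← transpose_mul, ← Matrix.mul_assoc, hPP,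
    Matrix.one_mul]

end Projection

end Matrix

section Reachable

variable {n m : ℕ} (A : Matrix (Fin n) (Fin n) ℝ) (B : Matrix (Fin n) (Fin m) ℝ) (x₀ : Fin n → ℝ)

theorem pow_mulVec_mem_reachSpan (k : ℕ) : A ^ k *ᵥ x₀ ∈ reachSpan A B x₀ :=
  pow_mulVec_mem_of_forall_lt_card
    (fun i hi => Submodule.subset_span (Or.inl ⟨i, by simpa using hi, rfl⟩)) k

theorem pow_mulVec_col_mem_reachSpan (k : ℕ) (j : Fin m) : A ^ k *ᵥ B.col j ∈ reachSpan A B x₀ :=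
  pow_mulVec_mem_of_forall_lt_card
    (fun i hi => Submodule.subset_span (Or.inr ⟨i, by simpa using hi, j, rfl⟩)) k

variable {A B x₀}

theorem mulVec_mem_reachSpan {s : Fin n → ℝ} (hs : s ∈ reachSpan A B x₀) :
    A *ᵥ s ∈ reachSpan A B x₀ := by
  refine (Submodule.span_le (p := (reachSpan A B x₀).comap A.mulVecLin)).mpr ?_ hs
  rintro _ (⟨i, -, rfl⟩ | ⟨i, -, j, rfl⟩) <;>
    rw [SetLike.mem_coe, Submodule.mem_comap, mulVecLin_apply, mulVec_mulVec, ← pow_succ']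
  · exact pow_mulVec_mem_reachSpan A B x₀ _
  · exact pow_mulVec_col_mem_reachSpan A B x₀ _ j

variable {nh : ℕ} {P : Matrix (Fin nh) (Fin n) ℝ} {Pdag : Matrix (Fin n) (Fin nh) ℝ}

theorem projector_mul_eq_of_range_eq_reachSpan (hPP : P * Pdag = 1)
    (hsym : (Pdag * P)ᵀ = Pdag * P) (hrange : LinearMap.range Pᵀ.mulVecLin = reachSpan A B x₀) :
    Pdag * P * B = B := ext_of_mulVec_single fun j => by
  have hcol : B.col j ∈ reachSpan A B x₀ := by
    simpa using pow_mulVec_col_mem_reachSpan A B x₀ 0 j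
  rw [← mulVec_mulVec, mulVec_single_one,
    mulVec_eq_self_of_mem_range_transpose hPP hsym (hrange ▸ hcol)]

theorem projector_mul_mul_projector_eq_of_range_eq_reachSpan (hPP : P * Pdag = 1)
    (hsym : (Pdag * P)ᵀ = Pdag * P) (hrange : LinearMap.range Pᵀ.mulVecLin = reachSpan A B x₀) :
    Pdag * P * A * (Pdag * P) = A * (Pdag * P) := ext_iff_mulVec.mpr fun x => by
  have := mulVec_eq_self_of_mem_range_transpose hPP hsym
    (hrange ▸ mulVec_mem_reachSpan (hrange ▸ mulVec_mem_range_transpose_of_isSymm hsym x))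
  simpa only [mulVec_mulVec, Matrix.mul_assoc] using this

end Reachable

/-- if `A` is Hurwitz, `im Pᵀ = im R(A,[B x₀])`, and the reduced
closed-loop matrix `PAP† − PBF̂` is Hurwitz, then with `F := F̂P` the full
closed-loop matrix `A − BF` is Hurwitz. -/
theorem stmt5 {n m nh : ℕ}
    (A : Matrix (Fin n) (Fin n) ℝ) (B : Matrix (Fin n) (Fin m) ℝ) (x₀ : Fin n → ℝ)
    (hA : IsHurwitz A)
    (P : Matrix (Fin nh) (Fin n) ℝ) (Pdag : Matrix (Fin n) (Fin nh) ℝ)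
    -- `P` has full row rank and `Pdag` is its Moore–Penrose pseudo-inverse:
    (hPP : P * Pdag = 1) (hsym : (Pdag * P)ᵀ = Pdag * P)
    -- row space of `P` = reachable subspace:
    (hrange : LinearMap.range (Pᵀ.mulVecLin) = reachSpan A B x₀)
    (Fhat : Matrix (Fin m) (Fin nh) ℝ)
    (hred : IsHurwitz (P * A * Pdag - P * B * Fhat)) :
    IsHurwitz (A - B * (Fhat * P)) := by
  have hQB := projector_mul_eq_of_range_eq_reachSpan hPP hsym hrange
  have hQA := projector_mul_mul_projector_eq_of_range_eq_reachSpan hPP hsym hrange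
  have hMA : (1 - Pdag * P) * (A - B * (Fhat * P)) = (1 - Pdag * P) * A := by
    have hNB : (1 - Pdag * P) * B = 0 := by rw [Matrix.sub_mul, Matrix.one_mul, hQB, sub_self]
    rw [Matrix.mul_sub, ← Matrix.mul_assoc, hNB, Matrix.zero_mul, sub_zero]
  have hPMP : P * (A - B * (Fhat * P)) * Pdag = P * A * Pdag - P * B * Fhat := by
    simp only [Matrix.mul_sub, Matrix.sub_mul, Matrix.mul_assoc, hPP, Matrix.mul_one]
  replace hPP := congrArg (·.map (algebraMap ℝ ℂ)) hPP
  replace hQA := congrArg (·.map (algebraMap ℝ ℂ)) hQA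
  replace hMA := congrArg (·.map (algebraMap ℝ ℂ)) hMA
  replace hPMP := congrArg (·.map (algebraMap ℝ ℂ)) hPMP
  unfold IsHurwitz at hA hred ⊢
  simp only [Matrix.map_mul, Matrix.map_sub, Matrix.map_one, map_sub, map_zero, map_one,
    implies_true] at hPP hQA hMA hPMP hred ⊢
  intro μ hμ
  rcases spectrum_subset_union_of_range_invariant hPP hQA hMA hμ with h | h
  · exact hred μ (hPMP ▸ h)
  · exact hA μ h
end

section
/- Let A ∈ ℝ^{n×n} be Hurwitz, B ∈ ℝ^{n×m}, x₀ ∈ ℝ^n, and P ∈ ℝ^{n̂×n} full row rank with orthogonal complement P̄ (P†P + P̄†P̄ = I). Consider the augmented system ė = PAP† e + PA P̄†P̄ x̂, ẋ̂ = A x̂ + B u with e(0) = 0, x̂(0) = x₀. Then for every input u, the solution x of ẋ = Ax + Bu, x(0) = x₀, satisfies x(t) = P† ξ(t) + P† e(t) + P̄†P̄ x̂(t) for all t, where ξ solves ξ̇ = PAP† ξ + PB u, ξ(0) = P x₀. In particular x̂(t) = x(t) and e(t) = P x(t) − ξ(t). -/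
/-!
Linear ODEs with Lipschitz right-hand side have unique solutions, so `x̂ = x`. Splitting
`x = P†Px + P̄†P̄x` shows that `Px` solves the reduced equation `ż = PAP† z + PAP̄†P̄ x + PBu`,
which `e + ξ` solves as well, with the same initial value `Px₀`; hence `e + ξ = Px`, and
applying the same splitting to `x` gives `x = P†(ξ + e) + P̄†P̄ x̂`.
-/

open Matrix Set

theorem eq_of_hasDerivAt_clm_add {E : Type*} [NormedAddCommGroup E] [NormedSpace ℝ E]
    (L : E →L[ℝ] E) (c : ℝ → E) {f g : ℝ → E} {t₀ : ℝ}
    (hf : ∀ t, HasDerivAt f (L (f t) + c t) t) (hg : ∀ t, HasDerivAt g (L (g t) + c t) t)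
    (h₀ : f t₀ = g t₀) : f = g :=
  ODE_solution_unique_univ (v := fun t y => L y + c t) (s := fun _ => univ) (K := ‖L‖₊)
    (fun t => LipschitzWith.lipschitzOnWith <| by
      simpa using L.lipschitz.add (LipschitzWith.const (c t)))
    (fun t => ⟨hf t, mem_univ _⟩) (fun t => ⟨hg t, mem_univ _⟩) h₀

namespace Matrix

variable {ι κ μ : Type*} [Fintype ι] [Fintype κ] [Fintype μ]

theorem eq_of_hasDerivAt_mulVec_add (M : Matrix ι ι ℝ) (c : ℝ → ι → ℝ) {f g : ℝ → ι → ℝ}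
    {t₀ : ℝ} (hf : ∀ t, HasDerivAt f (M *ᵥ f t + c t) t)
    (hg : ∀ t, HasDerivAt g (M *ᵥ g t + c t) t) (h₀ : f t₀ = g t₀) : f = g :=
  eq_of_hasDerivAt_clm_add M.mulVecLin.toContinuousLinearMap c
    (fun t => by simpa using hf t) (fun t => by simpa using hg t) h₀

theorem _root_.HasDerivAt.matrix_mulVec (M : Matrix κ ι ℝ) {f : ℝ → ι → ℝ} {f' : ι → ℝ}
    {t : ℝ} (hf : HasDerivAt f f' t) : HasDerivAt (fun s => M *ᵥ f s) (M *ᵥ f') t := by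
  simpa [Function.comp_def] using
    M.mulVecLin.toContinuousLinearMap.hasFDerivAt.comp_hasDerivAt t hf

theorem mulVec_mulVec_add_mulVec_mulVec_eq_self {R : Type*} [Semiring R] [DecidableEq ι]
    {Q : Matrix ι κ R} {P : Matrix κ ι R} {Q' : Matrix ι μ R} {P' : Matrix μ ι R}
    (h : Q * P + Q' * P' = 1) (v : ι → R) : Q *ᵥ (P *ᵥ v) + Q' *ᵥ (P' *ᵥ v) = v := by
  rw [mulVec_mulVec, mulVec_mulVec, ← add_mulVec, h, one_mulVec]

end Matrix

theorem stmt7_general {n m nh : ℕ}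
    (A : Matrix (Fin n) (Fin n) ℝ) (B : Matrix (Fin n) (Fin m) ℝ) (x₀ : Fin n → ℝ)
    (P : Matrix (Fin nh) (Fin n) ℝ) (Pdag : Matrix (Fin n) (Fin nh) ℝ)
    (Pb : Matrix (Fin (n - nh)) (Fin n) ℝ) (Pbdag : Matrix (Fin n) (Fin (n - nh)) ℝ)
    (hcompl : Pdag * P + Pbdag * Pb = 1)
    (u : ℝ → Fin m → ℝ)
    (x : ℝ → Fin n → ℝ) (xh : ℝ → Fin n → ℝ)
    (e : ℝ → Fin nh → ℝ) (ξ : ℝ → Fin nh → ℝ)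
    (hx0 : x 0 = x₀)
    (hx : ∀ t : ℝ, HasDerivAt x (A *ᵥ x t + B *ᵥ u t) t)
    (hxh0 : xh 0 = x₀)
    (hxh : ∀ t : ℝ, HasDerivAt xh (A *ᵥ xh t + B *ᵥ u t) t)
    (he0 : e 0 = 0)
    (he : ∀ t : ℝ, HasDerivAt e
      ((P * A * Pdag) *ᵥ e t + (P * A * Pbdag * Pb) *ᵥ xh t) t)
    (hξ0 : ξ 0 = P *ᵥ x₀)
    (hξ : ∀ t : ℝ, HasDerivAt ξ ((P * A * Pdag) *ᵥ ξ t + (P * B) *ᵥ u t) t) :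
    (∀ t : ℝ, x t = Pdag *ᵥ ξ t + Pdag *ᵥ e t + Pbdag *ᵥ (Pb *ᵥ xh t)) ∧
    (∀ t : ℝ, xh t = x t) ∧
    (∀ t : ℝ, e t = P *ᵥ x t - ξ t) := by
  have hxh_eq : xh = x := eq_of_hasDerivAt_mulVec_add A _ hxh hx (hxh0.trans hx0.symm)
  have hsum : (fun t => e t + ξ t) = fun t => P *ᵥ x t := by
    refine eq_of_hasDerivAt_mulVec_add (P * A * Pdag)
      (fun t => (P * A * Pbdag * Pb) *ᵥ x t + (P * B) *ᵥ u t) (t₀ := 0) (fun t => ?_)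
      (fun t => ?_) (by simp [he0, hξ0, hx0])
    · refine ((he t).add (hξ t)).congr_deriv ?_
      rw [hxh_eq, mulVec_add]
      abel
    · refine ((hx t).matrix_mulVec P).congr_deriv ?_
      conv_lhs => rw [← mulVec_mulVec_add_mulVec_mulVec_eq_self hcompl (x t)]
      simp only [mulVec_add, mulVec_mulVec, Matrix.mul_assoc]
      abel
  refine ⟨fun t => ?_, fun t => congrFun hxh_eq t, fun t => ?_⟩
  · rw [hxh_eq, add_comm (Pdag *ᵥ ξ t), ← mulVec_add, congrFun hsum t,
      mulVec_mulVec_add_mulVec_mulVec_eq_self hcompl]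
  · rw [← congrFun hsum t, add_sub_cancel_right]

/-- parallel-interconnection (error system) realization.  With the
augmented system `ė = PAP†e + PAP̄†P̄x̂`, `x̂' = Ax̂ + Bu`, `e(0) = 0`,
`x̂(0) = x₀`, and the reduced model `ξ̇ = PAP†ξ + PBu`, `ξ(0) = Px₀`, the
solution `x` of `ẋ = Ax + Bu`, `x(0) = x₀`, satisfies
`x = P†ξ + P†e + P̄†P̄x̂`; in particular `x̂ = x` and `e = Px − ξ`. -/
theorem stmt7 {n m nh : ℕ}
    (A : Matrix (Fin n) (Fin n) ℝ) (B : Matrix (Fin n) (Fin m) ℝ) (x₀ : Fin n → ℝ)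
    (P : Matrix (Fin nh) (Fin n) ℝ) (Pdag : Matrix (Fin n) (Fin nh) ℝ)
    (Pb : Matrix (Fin (n - nh)) (Fin n) ℝ) (Pbdag : Matrix (Fin n) (Fin (n - nh)) ℝ)
    (hPP : P * Pdag = 1) (hPbPb : Pb * Pbdag = 1)
    (hcompl : Pdag * P + Pbdag * Pb = 1)
    (u : ℝ → Fin m → ℝ)
    (x : ℝ → Fin n → ℝ) (xh : ℝ → Fin n → ℝ)
    (e : ℝ → Fin nh → ℝ) (ξ : ℝ → Fin nh → ℝ)
    (hx0 : x 0 = x₀)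
    (hx : ∀ t : ℝ, HasDerivAt x (A *ᵥ x t + B *ᵥ u t) t)
    (hxh0 : xh 0 = x₀)
    (hxh : ∀ t : ℝ, HasDerivAt xh (A *ᵥ xh t + B *ᵥ u t) t)
    (he0 : e 0 = 0)
    (he : ∀ t : ℝ, HasDerivAt e
      ((P * A * Pdag) *ᵥ e t + (P * A * Pbdag * Pb) *ᵥ xh t) t)
    (hξ0 : ξ 0 = P *ᵥ x₀)
    (hξ : ∀ t : ℝ, HasDerivAt ξ ((P * A * Pdag) *ᵥ ξ t + (P * B) *ᵥ u t) t) :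
    (∀ t : ℝ, x t = Pdag *ᵥ ξ t + Pdag *ᵥ e t + Pbdag *ᵥ (Pb *ᵥ xh t)) ∧
    (∀ t : ℝ, xh t = x t) ∧
    (∀ t : ℝ, e t = P *ᵥ x t - ξ t) :=
  stmt7_general A B x₀ P Pdag Pb Pbdag hcompl u x xh e ξ hx0 hx hxh0 hxh he0 he hξ0 hξ
end
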